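/- arXiv:1001.1931 — 4 statements merged into one kernel-verified Lean document; each statement's English description precedes it below -/
import Mathlib

section
/- Let q_j, q_p be complex quadratic forms on ℝ^{2n} with Hamilton maps F_j, F_p, and let l₁,…,l_k ∈ {1,…,N} index further quadratic forms with Hamilton maps F_{l_i}. For s₁, s₂ ∈ ℕ, let r̃(X) = Re q_j(Im F_{l₁}⋯Im F_{l_k}(Im F_p)^{s₁} X ; Im F_{l₁}⋯Im F_{l_k}(Im F_p)^{s₂} X). Then the Hamilton vector field of Im q_p acting on r̃ satisfies H_{Im q_p} r̃(X) = 2 Re q_j(Im F_{l₁}⋯Im F_{l_k}(Im F_p)^{s₁+1} X ; Im F_{l₁}⋯Im F_{l_k}(Im F_p)^{s₂} X) + 2 Re q_j(Im F_{l₁}⋯Im F_{l_k}(Im F_p)^{s₁} X ; Im F_{l₁}⋯Im F_{l_k}(Im F_p)^{s₂+1} X). -/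
/-- The phase space `ℝ^n × ℝ^n ≅ ℝ^{2n}`. -/
abbrev PS (n : ℕ) := (Fin n → ℝ) × (Fin n → ℝ)

/-- The canonical symplectic form `σ((x,ξ),(y,η)) = ξ·y − x·η` on `ℝ^{2n}`. -/
noncomputable def symp (n : ℕ) (X Y : PS n) : ℝ :=
  (∑ i, X.2 i * Y.1 i) - ∑ i, X.1 i * Y.2 i

/-- The Poisson bracket `{a,b} = ∂a/∂ξ·∂b/∂x − ∂a/∂x·∂b/∂ξ`, so that
`H_a b = {a,b}` where `H_a` is the Hamilton vector field of `a`. -/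
noncomputable def poisson (n : ℕ) (a b : PS n → ℝ) (X : PS n) : ℝ :=
  ∑ i : Fin n,
    ((fderiv ℝ a X) ((0 : Fin n → ℝ), Pi.single i 1) *
        (fderiv ℝ b X) (Pi.single i 1, (0 : Fin n → ℝ)) -
      (fderiv ℝ a X) (Pi.single i 1, (0 : Fin n → ℝ)) *
        (fderiv ℝ b X) ((0 : Fin n → ℝ), Pi.single i 1))

/-- The composition `Im F_{l₁} ∘ ⋯ ∘ Im F_{l_k}` associated to a tuple `l`. -/
noncomputable def compT (n N : ℕ) (ImF : Fin N → Module.End ℝ (PS n)) {k : ℕ}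
    (l : Fin k → Fin N) : Module.End ℝ (PS n) :=
  (List.ofFn fun i => ImF (l i)).prod

/-
Since `Im F_p` is the Hamilton map of `Im q_p`, the Hamilton field of `Im q_p` at `X` is
`2 Im F_p X`, so `{Im q_p, b}(X) = 2 db_X(Im F_p X)` for every `b`. Differentiating the bilinear
expression `r̃` in the direction `Im F_p X` by the product rule raises the power of `Im F_p` by one
in either slot.
-/

open Finset

theorem LinearMap.fderiv_bilinear_comp_apply
    {𝕜 E F F' G : Type*} [NontriviallyNormedField 𝕜] [CompleteSpace 𝕜]
    [NormedAddCommGroup E] [NormedSpace 𝕜 E] [FiniteDimensional 𝕜 E]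
    [NormedAddCommGroup F] [NormedSpace 𝕜 F] [FiniteDimensional 𝕜 F]
    [NormedAddCommGroup F'] [NormedSpace 𝕜 F'] [FiniteDimensional 𝕜 F']
    [NormedAddCommGroup G] [NormedSpace 𝕜 G]
    (B : F →ₗ[𝕜] F' →ₗ[𝕜] G) (A₁ : E →ₗ[𝕜] F) (A₂ : E →ₗ[𝕜] F') (X v : E) :
    fderiv 𝕜 (fun Z => B (A₁ Z) (A₂ Z)) X v = B (A₁ v) (A₂ X) + B (A₁ X) (A₂ v) := by
  change fderiv 𝕜 (fun Z => B.toContinuousBilinearMap (A₁.toContinuousLinearMap Z)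
    (A₂.toContinuousLinearMap Z)) X v = _
  rw [B.toContinuousBilinearMap.fderiv_of_bilinear A₁.toContinuousLinearMap.differentiableAt
    A₂.toContinuousLinearMap.differentiableAt, ContinuousLinearMap.fderiv,
    ContinuousLinearMap.fderiv]
  simp [add_comm]

theorem Module.End.mul_pow_succ_apply {R M : Type*} [Semiring R] [AddCommMonoid M] [Module R M]
    (T F : Module.End R M) (s : ℕ) (X : M) : (T * F ^ s) (F X) = (T * F ^ (s + 1)) X := by
  rw [pow_succ, ← mul_assoc]
  rfl

theorem symp_zero_single {n : ℕ} (i : Fin n) (M : PS n) :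
    symp n (0, Pi.single i 1) M = M.1 i := by
  simp [symp, Pi.single_apply]

theorem symp_single_zero {n : ℕ} (i : Fin n) (M : PS n) :
    symp n (Pi.single i 1, 0) M = -M.2 i := by
  simp [symp, Pi.single_apply]

theorem PS.eq_sum_single {n : ℕ} (M : PS n) :
    M = ∑ i, (M.1 i • (Pi.single i 1, 0) + M.2 i • (0, Pi.single i 1)) := by
  ext j <;> simp [Prod.fst_sum, Prod.snd_sum, Finset.sum_apply, Pi.single_apply]

theorem sum_symp_basis_mul_sub_eq_apply {n : ℕ} (ℓ : PS n →L[ℝ] ℝ) (M : PS n) :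
    ∑ i, (symp n (0, Pi.single i 1) M * ℓ (Pi.single i 1, 0)
      - symp n (Pi.single i 1, 0) M * ℓ (0, Pi.single i 1)) = ℓ M := by
  conv_rhs => rw [PS.eq_sum_single M]
  simp only [map_sum, map_add, map_smul, smul_eq_mul, symp_zero_single, symp_single_zero]
  congr 1 with i
  ring

theorem poisson_quadratic_eq_two_mul_fderiv {n : ℕ} (Q : PS n →ₗ[ℝ] PS n →ₗ[ℝ] ℝ)
    (F : Module.End ℝ (PS n)) (hQsymm : ∀ X Y, Q X Y = Q Y X)
    (hQF : ∀ X Y, Q X Y = symp n X (F Y)) (b : PS n → ℝ) (X : PS n) :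
    poisson n (fun Z => Q Z Z) b X = 2 * fderiv ℝ b X (F X) := by
  have hdQ (v : PS n) : fderiv ℝ (fun Z => Q Z Z) X v = 2 * symp n v (F X) :=
    calc fderiv ℝ (fun Z => Q Z Z) X v = Q v X + Q X v :=
          Q.fderiv_bilinear_comp_apply LinearMap.id LinearMap.id X v
      _ = 2 * symp n v (F X) := by rw [hQsymm X v, hQF]; ring
  rw [← sum_symp_basis_mul_sub_eq_apply (fderiv ℝ b X) (F X), mul_sum]
  unfold poisson
  simp only [hdQ]
  congr 1 with i
  ring

/-- `B` is the polarization of `Re q_j`, `BIm` that of `Im q_p`, and `ImF p` is the Hamilton map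
of `Im q_p`. -/
theorem hamilton_field_of_polarized_term_general (n N k s₁ s₂ : ℕ) (p : Fin N)
    (l : Fin k → Fin N)
    (B : PS n →ₗ[ℝ] PS n →ₗ[ℝ] ℝ)
    (ImF : Fin N → Module.End ℝ (PS n))
    (BIm : PS n →ₗ[ℝ] PS n →ₗ[ℝ] ℝ) (hImsym : ∀ X Y, BIm X Y = BIm Y X)
    (hImHam : ∀ X Y, BIm X Y = symp n X (ImF p Y)) :
    ∀ X : PS n,
      poisson n (fun Z => BIm Z Z)
        (fun Z => B ((compT n N ImF l * ImF p ^ s₁) Z) ((compT n N ImF l * ImF p ^ s₂) Z)) X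
      = 2 * B ((compT n N ImF l * ImF p ^ (s₁ + 1)) X) ((compT n N ImF l * ImF p ^ s₂) X)
        + 2 * B ((compT n N ImF l * ImF p ^ s₁) X) ((compT n N ImF l * ImF p ^ (s₂ + 1)) X) := by
  intro X
  rw [poisson_quadratic_eq_two_mul_fderiv BIm (ImF p) hImsym hImHam,
    LinearMap.fderiv_bilinear_comp_apply, Module.End.mul_pow_succ_apply,
    Module.End.mul_pow_succ_apply]
  ring

/-- for `r̃(X) = Re q_j(Im F_{l₁}⋯Im F_{l_k}(Im F_p)^{s₁} X ;
Im F_{l₁}⋯Im F_{l_k}(Im F_p)^{s₂} X)` (with `B` the polarized form of `Re q_j`, and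
`Im F_p` the Hamilton map of `Im q_p`), the Hamilton vector field of `Im q_p` gives
`H_{Im q_p} r̃(X) = 2 Re q_j(⋯(Im F_p)^{s₁+1}X ; ⋯(Im F_p)^{s₂}X)
 + 2 Re q_j(⋯(Im F_p)^{s₁}X ; ⋯(Im F_p)^{s₂+1}X)`. -/
theorem hamilton_field_of_polarized_term (n N k s₁ s₂ : ℕ) (p : Fin N)
    (l : Fin k → Fin N)
    (B : PS n →ₗ[ℝ] PS n →ₗ[ℝ] ℝ) (hsym : ∀ X Y, B X Y = B Y X)
    (ImF : Fin N → Module.End ℝ (PS n))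
    (BIm : PS n →ₗ[ℝ] PS n →ₗ[ℝ] ℝ) (hImsym : ∀ X Y, BIm X Y = BIm Y X)
    (hImHam : ∀ X Y, BIm X Y = symp n X (ImF p Y)) :
    ∀ X : PS n,
      poisson n (fun Z => BIm Z Z)
        (fun Z => B ((compT n N ImF l * ImF p ^ s₁) Z) ((compT n N ImF l * ImF p ^ s₂) Z)) X
      = 2 * B ((compT n N ImF l * ImF p ^ (s₁ + 1)) X) ((compT n N ImF l * ImF p ^ s₂) X)
        + 2 * B ((compT n N ImF l * ImF p ^ s₁) X) ((compT n N ImF l * ImF p ^ (s₂ + 1)) X) :=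
  hamilton_field_of_polarized_term_general n N k s₁ s₂ p l B ImF BIm hImsym hImHam
end

section
/- For n ≥ 2, define on ℝ^{2n} the quadratic forms q_j(x,ξ) = x₁² + ξ₁² + i(ξ₁² + x_{j+1} ξ₁) for 1 ≤ j ≤ n−1. Let F_j denote the Hamilton map of q_j. Then Ker(Re F_j) ∩ Ker(Re F_j ∘ Im F_j) ∩ ℝ^{2n} = {(x,ξ) ∈ ℝ^{2n} : x₁ = ξ₁ = x_{j+1} = 0}. -/
lemma symp_e2 (n : ℕ) (i : Fin n) (Z : PS n) :
    symp n ((0 : Fin n → ℝ), Pi.single i (1:ℝ)) Z = Z.1 i := by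
  simp [symp, Pi.single_apply, ite_mul]

lemma symp_e1 (n : ℕ) (i : Fin n) (Z : PS n) :
    symp n (Pi.single i (1:ℝ), (0 : Fin n → ℝ)) Z = -Z.2 i := by
  simp [symp, Pi.single_apply, ite_mul]

/-- for `n ≥ 2` and `1 ≤ j ≤ n−1`, consider the quadratic form
`q_j(x,ξ) = x₁² + ξ₁² + i(ξ₁² + x_{j+1}ξ₁)` on `ℝ^{2n}`, with `Bre` and `BIm` the
polarized forms of `Re q_j = x₁² + ξ₁²` and `Im q_j = ξ₁² + x_{j+1}ξ₁`, and
`Re F_j`, `Im F_j` the corresponding Hamilton maps. Then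
`Ker(Re F_j) ∩ Ker(Re F_j ∘ Im F_j) = {(x,ξ) : x₁ = ξ₁ = x_{j+1} = 0}`. -/
theorem example_kernel_computation (n : ℕ) (hn : 2 ≤ n)
    (j : ℕ) (hj1 : 1 ≤ j) (hj2 : j ≤ n - 1)
    (Bre BIm : PS n →ₗ[ℝ] PS n →ₗ[ℝ] ℝ)
    (hBre : ∀ X Y : PS n, Bre X Y =
      X.1 ⟨0, by omega⟩ * Y.1 ⟨0, by omega⟩ + X.2 ⟨0, by omega⟩ * Y.2 ⟨0, by omega⟩)
    (hBIm : ∀ X Y : PS n, BIm X Y =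
      X.2 ⟨0, by omega⟩ * Y.2 ⟨0, by omega⟩ +
        (X.1 ⟨j, by omega⟩ * Y.2 ⟨0, by omega⟩ + Y.1 ⟨j, by omega⟩ * X.2 ⟨0, by omega⟩) / 2)
    (ReF ImF : Module.End ℝ (PS n))
    (hReF : ∀ X Y, Bre X Y = symp n X (ReF Y))
    (hImF : ∀ X Y, BIm X Y = symp n X (ImF Y)) :
    {X : PS n | ReF X = 0 ∧ ReF (ImF X) = 0}
      = {X : PS n | X.1 ⟨0, by omega⟩ = 0 ∧ X.2 ⟨0, by omega⟩ = 0 ∧ X.1 ⟨j, by omega⟩ = 0} := by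
  have h0n : 0 < n := by omega
  have hjn : j < n := by omega
  set e0 : Fin n := ⟨0, h0n⟩ with he0
  set ej : Fin n := ⟨j, hjn⟩ with hej
  have hj0 : e0 ≠ ej := by
    simp [he0, hej, Fin.ext_iff]; omega
  -- component formulas
  have hR1 : ∀ (Y : PS n) (i : Fin n), (ReF Y).1 i =
      (Pi.single i 1 : Fin n → ℝ) e0 * Y.2 e0 := by
    intro Y i
    have h := hReF ((0 : Fin n → ℝ), Pi.single i 1) Y
    rw [symp_e2] at h
    rw [← h, hBre]; simp
  have hR2 : ∀ (Y : PS n) (i : Fin n), -(ReF Y).2 i =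
      (Pi.single i 1 : Fin n → ℝ) e0 * Y.1 e0 := by
    intro Y i
    have h := hReF (Pi.single i 1, (0 : Fin n → ℝ)) Y
    rw [symp_e1] at h
    rw [← h, hBre]; simp
  have hI1 : ∀ (Y : PS n), (ImF Y).1 e0 = Y.2 e0 + Y.1 ej / 2 := by
    intro Y
    have h := hImF ((0 : Fin n → ℝ), Pi.single e0 1) Y
    rw [symp_e2] at h
    rw [← h, hBIm]; simp; try ring
  have hI2 : ∀ (Y : PS n), -(ImF Y).2 e0 = (Pi.single e0 1 : Fin n → ℝ) ej * Y.2 e0 / 2 := by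
    intro Y
    have h := hImF (Pi.single e0 1, (0 : Fin n → ℝ)) Y
    rw [symp_e1] at h
    rw [← h, hBIm]; simp; try ring
  ext X
  simp only [Set.mem_setOf_eq]
  constructor
  · rintro ⟨h1, h2⟩
    have hx1 : X.1 e0 = 0 := by
      have := hR2 X e0; rw [h1] at this; simpa using this.symm
    have hx2 : X.2 e0 = 0 := by
      have := hR1 X e0; rw [h1] at this; simpa using this.symm
    have hIm1 : (ImF X).1 e0 = 0 := by
      have := hR2 (ImF X) e0; rw [h2] at this; simpa using this.symm
    have hxj : X.1 ej = 0 := by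
      have := hI1 X; rw [hIm1, hx2] at this; linarith
    exact ⟨hx1, hx2, hxj⟩
  · rintro ⟨h1, h2, h3⟩
    constructor
    · ext i
      · rw [hR1]; simp [h2]
      · have := hR2 X i; simp [h1] at this; simpa using this
    · have hIm1 : (ImF X).1 e0 = 0 := by rw [hI1, h2, h3]; ring
      have hIm2 : (ImF X).2 e0 = 0 := by
        have := hI2 X; simp [h2] at this; exact this
      ext i
      · rw [hR1]; simp [hIm2]
      · have := hR2 (ImF X) i; simp [hIm1] at this; simpa using this
end

section
/- Let q₁,…,q_N be complex quadratic forms on ℝ^{2n} with non-negative real parts and Hamilton maps F₁,…,F_N, and for 0 ≤ k ≤ m define r_k(X) = Σ_{j,(l₁,…,l_k)} Re q_j(Im F_{l₁}⋯Im F_{l_k} X). Then for every p ∈ {1,…,N} and 0 ≤ j ≤ m−1, the Poisson bracket of Im q_p with r_{m−j−1} satisfies H_{Im q_p} r_{m−j−1}(X) = 4 Σ_{s=1}^N Σ_{(l₁,…,l_{m−j−1})} Re q_s(Im F_{l₁}⋯Im F_{l_{m−j−1}} X ; Im F_{l₁}⋯Im F_{l_{m−j−1}} Im F_p X), and consequently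 |H_{Im q_p} r_{m−j−1}(X)| ≤ 4 r_{m−j−1}(X)^{1/2} r_{m−j}(X)^{1/2}. -/
/-- `r_k(X) = Σ_j Σ_{(l₁,…,l_k)} Re q_j(Im F_{l₁}⋯Im F_{l_k} X)`. -/
noncomputable def rK (n N : ℕ) (B : Fin N → (PS n →ₗ[ℝ] PS n →ₗ[ℝ] ℝ))
    (ImF : Fin N → Module.End ℝ (PS n)) (k : ℕ) (X : PS n) : ℝ :=
  ∑ j, ∑ l : Fin k → Fin N, B j (compT n N ImF l X) (compT n N ImF l X)

section Aux
variable {n : ℕ}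

noncomputable def bilinCLM (b : PS n →ₗ[ℝ] PS n →ₗ[ℝ] ℝ) : PS n →L[ℝ] PS n →L[ℝ] ℝ :=
  LinearMap.toContinuousLinearMap
    { toFun := fun x => LinearMap.toContinuousLinearMap (b x)
      map_add' := by
        intro x y
        show LinearMap.toContinuousLinearMap (b (x + y)) = _
        rw [map_add, map_add]
      map_smul' := by
        intro c x
        show LinearMap.toContinuousLinearMap (b (c • x)) = _
        rw [map_smul, map_smul]
        rfl }

lemma bilinCLM_apply (b : PS n →ₗ[ℝ] PS n →ₗ[ℝ] ℝ) (x y : PS n) :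
    bilinCLM b x y = b x y := rfl

lemma hasFDerivAt_quad (b : PS n →ₗ[ℝ] PS n →ₗ[ℝ] ℝ) (X : PS n) :
    HasFDerivAt (fun Z => b Z Z)
      (LinearMap.toContinuousLinearMap (b X + (b.flip) X)) X := by
  have h1 : HasFDerivAt (fun Z : PS n => (Z, Z))
      ((ContinuousLinearMap.id ℝ (PS n)).prod (ContinuousLinearMap.id ℝ (PS n))) X :=
    HasFDerivAt.prodMk (hasFDerivAt_id X) (hasFDerivAt_id X)
  have h2 := HasFDerivAt.comp (f := fun Z : PS n => (Z, Z)) X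
    ((bilinCLM b).isBoundedBilinearMap.hasFDerivAt (X, X)) h1
  refine h2.congr_fderiv ?_
  refine ContinuousLinearMap.ext fun v => ?_
  show (LinearMap.toContinuousLinearMap (b X + b.flip X)) v = _
  simp only [ContinuousLinearMap.comp_apply, ContinuousLinearMap.prod_apply,
    ContinuousLinearMap.coe_id', id_eq, IsBoundedBilinearMap.deriv_apply,
    LinearMap.coe_toContinuousLinearMap', LinearMap.add_apply, LinearMap.flip_apply,
    bilinCLM_apply]


lemma expand_lin (φ : PS n →ₗ[ℝ] ℝ) (W : PS n) :
    ∑ i : Fin n, (W.1 i * φ (Pi.single i 1, 0) + W.2 i * φ ((0 : Fin n → ℝ), Pi.single i 1))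
      = φ W := by
  have hW : W = (∑ i : Fin n, W.1 i • ((Pi.single i 1 : Fin n → ℝ), (0 : Fin n → ℝ)))
      + ∑ i : Fin n, W.2 i • ((0 : Fin n → ℝ), (Pi.single i 1 : Fin n → ℝ)) := by
    ext k <;> simp [Finset.sum_apply, Pi.single_apply, Finset.sum_ite_eq', Prod.fst_sum, Prod.snd_sum, mul_comm]
  calc ∑ i : Fin n, (W.1 i * φ (Pi.single i 1, 0) + W.2 i * φ ((0:Fin n → ℝ), Pi.single i 1))
      = φ ((∑ i : Fin n, W.1 i • ((Pi.single i 1 : Fin n → ℝ), (0 : Fin n → ℝ)))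
        + ∑ i : Fin n, W.2 i • ((0 : Fin n → ℝ), (Pi.single i 1 : Fin n → ℝ))) := by
        have e1 : ∀ (c : ℝ) (v : Fin n → ℝ), φ (c • v, 0) = c * φ (v, 0) := by
          intro c v
          have h : ((c • v, (0 : Fin n → ℝ)) : PS n) = c • ((v, 0) : PS n) := by
            ext <;> simp
          rw [h, map_smul, smul_eq_mul]
        have e2 : ∀ (c : ℝ) (v : Fin n → ℝ), φ ((0 : Fin n → ℝ), c • v) = c * φ (0, v) := by
          intro c v
          have h : (((0 : Fin n → ℝ), c • v) : PS n) = c • (((0 : Fin n → ℝ), v) : PS n) := by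
            ext <;> simp
          rw [h, map_smul, smul_eq_mul]
        simp only [map_add, map_sum, Prod.smul_mk, smul_zero, e1, e2, Finset.sum_add_distrib]
    _ = φ W := by rw [← hW]

lemma cs_bilin (b : PS n →ₗ[ℝ] PS n →ₗ[ℝ] ℝ) (hsym : ∀ X Y, b X Y = b Y X)
    (hpos : ∀ X, 0 ≤ b X X) (x y : PS n) :
    |b x y| ≤ Real.sqrt (b x x) * Real.sqrt (b y y) := by
  have hd : discrim (b y y) (2 * b x y) (b x x) ≤ 0 := by
    apply discrim_le_zero
    intro t
    have := hpos (x + t • y)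
    have hexp : b (x + t • y) (x + t • y)
        = b y y * (t * t) + 2 * b x y * t + b x x := by
      simp [map_add, map_smul, smul_eq_mul, hsym y x]; ring
    linarith [hexp ▸ this]
  rw [discrim] at hd
  have h2 : (b x y) ^ 2 ≤ b x x * b y y := by nlinarith
  calc |b x y| = Real.sqrt ((b x y) ^ 2) := by rw [Real.sqrt_sq_eq_abs]
    _ ≤ Real.sqrt (b x x * b y y) := Real.sqrt_le_sqrt h2
    _ = Real.sqrt (b x x) * Real.sqrt (b y y) := Real.sqrt_mul (hpos x) _

end Aux

section Main
variable {n N : ℕ}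

lemma compT_snoc (ImF : Fin N → Module.End ℝ (PS n)) {k : ℕ} (l : Fin k → Fin N) (p : Fin N) :
    compT n N ImF (Fin.snoc l p) = compT n N ImF l * ImF p := by
  unfold compT
  rw [List.ofFn_succ']
  simp [Fin.snoc_castSucc, Fin.snoc_last, List.concat_eq_append, List.prod_append]

lemma hasFDerivAt_rK (B : Fin N → (PS n →ₗ[ℝ] PS n →ₗ[ℝ] ℝ))
    (ImF : Fin N → Module.End ℝ (PS n)) (k : ℕ) (X : PS n) :
    HasFDerivAt (rK n N B ImF k)
      (∑ s, ∑ l : Fin k → Fin N,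
        LinearMap.toContinuousLinearMap
          (((B s).compl₁₂ (compT n N ImF l : PS n →ₗ[ℝ] PS n) (compT n N ImF l)) X
            + ((B s).compl₁₂ (compT n N ImF l : PS n →ₗ[ℝ] PS n) (compT n N ImF l)).flip X)) X := by
  have h : ∀ s ∈ (Finset.univ : Finset (Fin N)),
      HasFDerivAt (fun Z : PS n => ∑ l : Fin k → Fin N,
          ((B s).compl₁₂ (compT n N ImF l : PS n →ₗ[ℝ] PS n) (compT n N ImF l)) Z Z)
        (∑ l : Fin k → Fin N,
          LinearMap.toContinuousLinearMap
            (((B s).compl₁₂ (compT n N ImF l : PS n →ₗ[ℝ] PS n) (compT n N ImF l)) X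
              + ((B s).compl₁₂ (compT n N ImF l : PS n →ₗ[ℝ] PS n) (compT n N ImF l)).flip X)) X := by
    intro s _
    exact HasFDerivAt.fun_sum fun l _ => hasFDerivAt_quad _ X
  have h2 := HasFDerivAt.fun_sum h
  have he : rK n N B ImF k = fun Z : PS n => ∑ s, ∑ l : Fin k → Fin N,
      ((B s).compl₁₂ (compT n N ImF l : PS n →ₗ[ℝ] PS n) (compT n N ImF l)) Z Z := by
    funext Z
    simp [rK, LinearMap.compl₁₂_apply]
  rw [he]
  exact h2

lemma poisson_rK_eq (B : Fin N → (PS n →ₗ[ℝ] PS n →ₗ[ℝ] ℝ))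
    (hsym : ∀ s X Y, B s X Y = B s Y X)
    (ImF : Fin N → Module.End ℝ (PS n))
    (BIm : Fin N → (PS n →ₗ[ℝ] PS n →ₗ[ℝ] ℝ))
    (hImsym : ∀ s X Y, BIm s X Y = BIm s Y X)
    (hImHam : ∀ s X Y, BIm s X Y = symp n X (ImF s Y))
    (p : Fin N) (k : ℕ) (X : PS n) :
    poisson n (fun Z => BIm p Z Z) (rK n N B ImF k) X
      = 4 * ∑ s, ∑ l : Fin k → Fin N,
          B s (compT n N ImF l X) (compT n N ImF l (ImF p X)) := by
  have ha := (hasFDerivAt_quad (BIm p) X).fderiv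
  have hb := (hasFDerivAt_rK B ImF k X).fderiv
  set φ : PS n →ₗ[ℝ] ℝ := ∑ s, ∑ l : Fin k → Fin N,
      ((B s).compl₁₂ (compT n N ImF l : PS n →ₗ[ℝ] PS n) (compT n N ImF l)) X with hφdef
  have hφ : ∀ v : PS n, φ v = ∑ s, ∑ l : Fin k → Fin N,
      B s (compT n N ImF l X) (compT n N ImF l v) := by
    intro v
    simp [hφdef, LinearMap.sum_apply, LinearMap.compl₁₂_apply]
  have h1 : ∀ i : Fin n,
      BIm p X ((0 : Fin n → ℝ), Pi.single i 1) = (ImF p X).1 i := by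
    intro i
    rw [hImsym, hImHam]
    simp [symp, Pi.single_apply, ite_mul]
  have h2 : ∀ i : Fin n,
      BIm p X (Pi.single i 1, (0 : Fin n → ℝ)) = -(ImF p X).2 i := by
    intro i
    rw [hImsym, hImHam]
    simp [symp, Pi.single_apply, ite_mul]
  have hDb : ∀ v : PS n, (fderiv ℝ (rK n N B ImF k) X) v = 2 * φ v := by
    intro v
    rw [hb]
    simp only [ContinuousLinearMap.coe_sum', Finset.sum_apply,
      LinearMap.coe_toContinuousLinearMap', LinearMap.add_apply, LinearMap.flip_apply,
      LinearMap.compl₁₂_apply, hφ, Finset.mul_sum]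
    congr 1
    funext s
    congr 1
    funext l
    rw [hsym s (compT n N ImF l v) (compT n N ImF l X)]
    ring
  have hDa : ∀ v : PS n, (fderiv ℝ (fun Z => BIm p Z Z) X) v = 2 * BIm p X v := by
    intro v
    rw [ha]
    simp only [LinearMap.coe_toContinuousLinearMap', LinearMap.add_apply, LinearMap.flip_apply]
    rw [hImsym p v X]
    ring
  unfold poisson
  calc ∑ i : Fin n,
      ((fderiv ℝ (fun Z => BIm p Z Z) X) ((0 : Fin n → ℝ), Pi.single i 1) *
          (fderiv ℝ (rK n N B ImF k) X) (Pi.single i 1, (0 : Fin n → ℝ)) -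
        (fderiv ℝ (fun Z => BIm p Z Z) X) (Pi.single i 1, (0 : Fin n → ℝ)) *
          (fderiv ℝ (rK n N B ImF k) X) ((0 : Fin n → ℝ), Pi.single i 1))
      = ∑ i : Fin n, 4 * ((ImF p X).1 i * φ (Pi.single i 1, (0 : Fin n → ℝ))
          + (ImF p X).2 i * φ ((0 : Fin n → ℝ), Pi.single i 1)) := by
        refine Finset.sum_congr rfl fun i _ => ?_
        rw [hDa, hDa, hDb, hDb, h1, h2]
        ring
    _ = 4 * ∑ i : Fin n, ((ImF p X).1 i * φ (Pi.single i 1, (0 : Fin n → ℝ))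
          + (ImF p X).2 i * φ ((0 : Fin n → ℝ), Pi.single i 1)) := by
        rw [Finset.mul_sum]
    _ = 4 * φ (ImF p X) := by rw [expand_lin φ (ImF p X)]
    _ = _ := by rw [hφ]


lemma poisson_rK_bound (B : Fin N → (PS n →ₗ[ℝ] PS n →ₗ[ℝ] ℝ))
    (hsym : ∀ s X Y, B s X Y = B s Y X)
    (hpos : ∀ s X, 0 ≤ B s X X)
    (ImF : Fin N → Module.End ℝ (PS n))
    (BIm : Fin N → (PS n →ₗ[ℝ] PS n →ₗ[ℝ] ℝ))
    (hImsym : ∀ s X Y, BIm s X Y = BIm s Y X)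
    (hImHam : ∀ s X Y, BIm s X Y = symp n X (ImF s Y))
    (p : Fin N) (k : ℕ) (X : PS n) :
    |poisson n (fun Z => BIm p Z Z) (rK n N B ImF k) X|
      ≤ 4 * Real.sqrt (rK n N B ImF k X) * Real.sqrt (rK n N B ImF (k + 1) X) := by
  rw [poisson_rK_eq B hsym ImF BIm hImsym hImHam p k X]
  set W := ImF p X with hW
  have habs : |4 * ∑ s, ∑ l : Fin k → Fin N,
      B s (compT n N ImF l X) (compT n N ImF l W)|
      ≤ 4 * ∑ s, ∑ l : Fin k → Fin N,
        Real.sqrt (B s (compT n N ImF l X) (compT n N ImF l X))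
          * Real.sqrt (B s (compT n N ImF l W) (compT n N ImF l W)) := by
    rw [abs_mul, abs_of_nonneg (by norm_num : (0:ℝ) ≤ 4)]
    gcongr 4 * ?_
    calc |∑ s, ∑ l : Fin k → Fin N, B s (compT n N ImF l X) (compT n N ImF l W)|
        ≤ ∑ s, |∑ l : Fin k → Fin N, B s (compT n N ImF l X) (compT n N ImF l W)| :=
          Finset.abs_sum_le_sum_abs _ _
      _ ≤ ∑ s, ∑ l : Fin k → Fin N,
            |B s (compT n N ImF l X) (compT n N ImF l W)| := by
          gcongr with s hs
          exact Finset.abs_sum_le_sum_abs _ _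
      _ ≤ _ := by
          gcongr with s hs l hl
          exact cs_bilin (B s) (hsym s) (hpos s) _ _
  refine habs.trans ?_
  have hcs : ∑ s, ∑ l : Fin k → Fin N,
      Real.sqrt (B s (compT n N ImF l X) (compT n N ImF l X))
        * Real.sqrt (B s (compT n N ImF l W) (compT n N ImF l W))
      ≤ Real.sqrt (rK n N B ImF k X)
        * Real.sqrt (∑ s, ∑ l : Fin k → Fin N,
            B s (compT n N ImF l W) (compT n N ImF l W)) := by
    have e1 : (∑ s, ∑ l : Fin k → Fin N,
        Real.sqrt (B s (compT n N ImF l X) (compT n N ImF l X))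
          * Real.sqrt (B s (compT n N ImF l W) (compT n N ImF l W)))
        = ∑ x : Fin N × (Fin k → Fin N),
            Real.sqrt (B x.1 (compT n N ImF x.2 X) (compT n N ImF x.2 X))
              * Real.sqrt (B x.1 (compT n N ImF x.2 W) (compT n N ImF x.2 W)) := by
      rw [Fintype.sum_prod_type]
    have e2 : rK n N B ImF k X
        = ∑ x : Fin N × (Fin k → Fin N),
            B x.1 (compT n N ImF x.2 X) (compT n N ImF x.2 X) := by
      rw [Fintype.sum_prod_type]; rfl
    have e3 : (∑ s, ∑ l : Fin k → Fin N,
        B s (compT n N ImF l W) (compT n N ImF l W))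
        = ∑ x : Fin N × (Fin k → Fin N),
            B x.1 (compT n N ImF x.2 W) (compT n N ImF x.2 W) := by
      rw [Fintype.sum_prod_type]
    rw [e1, e2, e3]
    exact Real.sum_sqrt_mul_sqrt_le (Finset.univ : Finset (Fin N × (Fin k → Fin N)))
      (fun x => hpos _ _) (fun x => hpos _ _)
  have hsnoc : ∑ s, ∑ l : Fin k → Fin N,
      B s (compT n N ImF l W) (compT n N ImF l W) ≤ rK n N B ImF (k + 1) X := by
    unfold rK
    gcongr with s hs
    have he : ∀ l : Fin k → Fin N,
        B s (compT n N ImF l W) (compT n N ImF l W)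
          = B s (compT n N ImF (Fin.snoc l p : Fin (k+1) → Fin N) X)
              (compT n N ImF (Fin.snoc l p : Fin (k+1) → Fin N) X) := by
      intro l
      rw [compT_snoc]
      rfl
    simp_rw [he]
    have hinj : ∀ a ∈ (Finset.univ : Finset (Fin k → Fin N)), ∀ b ∈ Finset.univ,
        (Fin.snoc a p : Fin (k+1) → Fin N) = Fin.snoc b p → a = b := by
      intro a _ b _ h
      funext i
      have := congrFun h (Fin.castSucc i)
      simpa using this
    rw [← Finset.sum_image (f := fun l' : Fin (k+1) → Fin N =>
      B s (compT n N ImF l' X) (compT n N ImF l' X))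
      (g := fun l : Fin k → Fin N => (Fin.snoc l p : Fin (k+1) → Fin N)) hinj]
    exact Finset.sum_le_sum_of_subset_of_nonneg (Finset.subset_univ _)
      (fun l' _ _ => hpos s _)
  calc 4 * ∑ s, ∑ l : Fin k → Fin N,
        Real.sqrt (B s (compT n N ImF l X) (compT n N ImF l X))
          * Real.sqrt (B s (compT n N ImF l W) (compT n N ImF l W))
      ≤ 4 * (Real.sqrt (rK n N B ImF k X)
          * Real.sqrt (∑ s, ∑ l : Fin k → Fin N,
              B s (compT n N ImF l W) (compT n N ImF l W))) := by gcongr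
    _ ≤ 4 * (Real.sqrt (rK n N B ImF k X) * Real.sqrt (rK n N B ImF (k + 1) X)) := by
        gcongr
    _ = _ := by ring

end Main

/-- with `B j` the polarized forms of the non-negative `Re q_j` and
`Im F_s` the Hamilton maps of `Im q_s` (polarized forms `BIm s`), for `0 ≤ j ≤ m−1`,
`H_{Im q_p} r_{m−j−1}(X) = 4 Σ_s Σ_{(l₁,…,l_{m−j−1})}
  Re q_s(Im F_{l₁}⋯Im F_{l_{m−j−1}} X ; Im F_{l₁}⋯Im F_{l_{m−j−1}} Im F_p X)`,
and consequently `|H_{Im q_p} r_{m−j−1}(X)| ≤ 4 r_{m−j−1}(X)^{1/2} r_{m−j}(X)^{1/2}`. -/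
theorem poisson_rK_identity_and_bound (n N m : ℕ) (hm : 1 ≤ m)
    (j : ℕ) (hj : j ≤ m - 1) (p : Fin N)
    (B : Fin N → (PS n →ₗ[ℝ] PS n →ₗ[ℝ] ℝ))
    (hsym : ∀ s X Y, B s X Y = B s Y X)
    (hpos : ∀ s X, 0 ≤ B s X X)
    (ImF : Fin N → Module.End ℝ (PS n))
    (BIm : Fin N → (PS n →ₗ[ℝ] PS n →ₗ[ℝ] ℝ))
    (hImsym : ∀ s X Y, BIm s X Y = BIm s Y X)
    (hImHam : ∀ s X Y, BIm s X Y = symp n X (ImF s Y)) :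
    (∀ X : PS n,
      poisson n (fun Z => BIm p Z Z) (rK n N B ImF (m - j - 1)) X
        = 4 * ∑ s, ∑ l : Fin (m - j - 1) → Fin N,
            B s (compT n N ImF l X) (compT n N ImF l (ImF p X))) ∧
    (∀ X : PS n,
      |poisson n (fun Z => BIm p Z Z) (rK n N B ImF (m - j - 1)) X|
        ≤ 4 * Real.sqrt (rK n N B ImF (m - j - 1) X)
            * Real.sqrt (rK n N B ImF (m - j) X)) := by
  constructor
  · intro X
    exact poisson_rK_eq B hsym ImF BIm hImsym hImHam p (m - j - 1) X
  · intro X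
    have hk : m - j = (m - j - 1) + 1 := by omega
    rw [hk]
    exact poisson_rK_bound B hsym hpos ImF BIm hImsym hImHam p (m - j - 1) X
end

section
/- Let r : ℝ^{2n} → ℝ be a non-negative quadratic form, s ∈ ℝ, and Ω an open set on which r(X) ≥ c⟨X⟩^{2β} for some c > 0 and β > 0. Then for every multi-index α there is C_α > 0 such that |∂^α (r(X)^s)| ≤ C_α r(X)^{s − |α|/2} for all X ∈ Ω. In particular |∇(r(X)^s)| ≤ C r(X)^{s − 1/2} on Ω. -/
/-!
Write `r X = B X X` with `B` symmetric and positive semidefinite. By Cauchy–Schwarz,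
`|B X v| ≤ √(r X) √(r v)`, so `‖Dr(X)‖ ≤ C √(r X)`; moreover `D²r` is constant and the higher
derivatives vanish, so `‖Dⁱr(X)‖ ≤ Kⁱ r(X)^(1 - i/2)` for every `i`.

For any `f` with such bounds and `t = f X > 0`, the rescaled function `t⁻¹ • f` equals `1` at `X`
and has `i`-th derivatives bounded by `(K t^(-1/2))ⁱ`. Faà di Bruno's bound for the composition
with `u ↦ u ^ s`, whose derivatives at `u = 1` do not depend on `X`, gives
`‖Dᵏ(f ^ s)(X)‖ = t ^ s ‖Dᵏ((t⁻¹ • f) ^ s)(X)‖ ≤ C t ^ s (K t^(-1/2))ᵏ = C Kᵏ f(X)^(s - k/2)`.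
-/

open Set
open scoped Nat

namespace QuadraticForm

variable {E : Type*} [NormedAddCommGroup E] [NormedSpace ℝ E] [FiniteDimensional ℝ E]
  (r : QuadraticForm ℝ E)

noncomputable def associatedL : E →L[ℝ] E →L[ℝ] ℝ :=
  (QuadraticMap.associated r).toContinuousBilinearMap

lemma associatedL_apply (x y : E) : r.associatedL x y = QuadraticMap.associated r x y := rfl

lemma associatedL_self (x : E) : r.associatedL x x = r x :=
  QuadraticMap.associated_eq_self_apply ℝ r x

lemma associatedL_comm (x y : E) : r.associatedL x y = r.associatedL y x :=
  QuadraticMap.associated_isSymm ℝ r x y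

lemma sq_associatedL_le (hr : ∀ x, 0 ≤ r x) (x y : E) :
    r.associatedL x y ^ 2 ≤ r x * r y := by
  simpa only [associatedL_apply, QuadraticMap.associated_eq_self_apply] using
    LinearMap.BilinForm.apply_sq_le_of_symm (QuadraticMap.associated r)
      (fun x => (QuadraticMap.associated_eq_self_apply ℝ r x).symm ▸ hr x)
      (QuadraticForm.associated_isSymm ℝ r) x y

lemma eq_associatedL_self : ⇑r = fun x => r.associatedL x x :=
  funext fun x => (r.associatedL_self x).symm

lemma hasFDerivAt (x : E) : HasFDerivAt r ((2 : ℝ) • r.associatedL x) x := by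
  rw [eq_associatedL_self]
  refine (r.associatedL.hasFDerivAt_of_bilinear (hasFDerivAt_id x)
    (hasFDerivAt_id x)).congr_fderiv ?_
  ext v
  simp [two_smul, r.associatedL_comm v x]

lemma fderiv_eq : fderiv ℝ r = ⇑((2 : ℝ) • r.associatedL) :=
  funext fun x => (r.hasFDerivAt x).fderiv

lemma contDiff {n : WithTop ℕ∞} : ContDiff ℝ n r := by
  rw [eq_associatedL_self]
  exact r.associatedL.contDiff.clm_apply contDiff_id

lemma norm_fderiv_le (hr : ∀ x, 0 ≤ r x) (x : E) :
    ‖fderiv ℝ r x‖ ≤ 2 * √‖r.associatedL‖ * √(r x) := by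
  rw [(r.hasFDerivAt x).fderiv]
  refine ContinuousLinearMap.opNorm_le_bound _ (by positivity) fun v => ?_
  have hrv : r v ≤ ‖r.associatedL‖ * ‖v‖ ^ 2 := by
    rw [← r.associatedL_self, sq, ← mul_assoc]
    exact (le_abs_self _).trans (r.associatedL.le_opNorm₂ v v)
  have hcs : |r.associatedL x v| ≤ √(r x) * (√‖r.associatedL‖ * ‖v‖) := by
    calc |r.associatedL x v| ≤ √(r x * r v) :=
          Real.abs_le_sqrt (r.sq_associatedL_le hr x v)
      _ ≤ √(r x * (‖r.associatedL‖ * ‖v‖ ^ 2)) := by gcongr; exact hr x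
      _ = √(r x) * (√‖r.associatedL‖ * ‖v‖) := by
          rw [Real.sqrt_mul (hr x), Real.sqrt_mul (norm_nonneg r.associatedL),
            Real.sqrt_sq (norm_nonneg v)]
  rw [smul_apply, smul_eq_mul, Real.norm_eq_abs, abs_mul, abs_two, mul_assoc, mul_assoc]
  gcongr
  linarith

lemma norm_iteratedFDeriv_two_le (x : E) :
    ‖iteratedFDeriv ℝ 2 r x‖ ≤ 2 * ‖r.associatedL‖ := by
  rw [← norm_iteratedFDeriv_fderiv, fderiv_eq, norm_iteratedFDeriv_one,
    ContinuousLinearMap.fderiv]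
  refine ContinuousLinearMap.opNorm_le_bound _ (by positivity) fun v => ?_
  rw [smul_apply, norm_smul, Real.norm_two, mul_assoc]
  gcongr
  exact r.associatedL.le_opNorm v

lemma iteratedFDeriv_add_three (i : ℕ) (x : E) : iteratedFDeriv ℝ (i + 3) r x = 0 := by
  have hconst : fderiv ℝ ⇑((2 : ℝ) • r.associatedL) = fun _ => (2 : ℝ) • r.associatedL :=
    funext fun _ => ContinuousLinearMap.fderiv _
  rw [← norm_eq_zero, ← norm_iteratedFDeriv_fderiv, fderiv_eq, ← norm_iteratedFDeriv_fderiv,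
    hconst, iteratedFDeriv_const_of_ne (Nat.succ_ne_zero i), Pi.zero_apply, norm_zero]

lemma exists_norm_iteratedFDeriv_le (hr : ∀ x, 0 ≤ r x) :
    ∃ K > 0, ∀ i x, 0 < r x → ‖iteratedFDeriv ℝ i r x‖ ≤ K ^ i * r x ^ (1 - (i : ℝ) / 2) := by
  refine ⟨2 * √‖r.associatedL‖ + 1, by positivity, fun i x hx => ?_⟩
  match i with
  | 0 => simp [abs_of_pos hx]
  | 1 =>
    rw [norm_iteratedFDeriv_one, pow_one, show 1 - ((1 : ℕ) : ℝ) / 2 = 1 / 2 by norm_num,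
      ← Real.sqrt_eq_rpow]
    exact (r.norm_fderiv_le hr x).trans (by gcongr; linarith)
  | 2 =>
    refine (r.norm_iteratedFDeriv_two_le x).trans ?_
    have hB := Real.sq_sqrt (norm_nonneg r.associatedL)
    norm_num
    nlinarith [Real.sqrt_nonneg ‖r.associatedL‖]
  | i + 3 =>
    rw [iteratedFDeriv_add_three, norm_zero]
    positivity

end QuadraticForm

section

variable {E : Type*} [NormedAddCommGroup E] [NormedSpace ℝ E]

lemma contDiffOn_rpow_const_Ioi (s : ℝ) {n : WithTop ℕ∞} :
    ContDiffOn ℝ n (fun u : ℝ => u ^ s) (Ioi 0) :=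
  fun _ hu => (Real.contDiffAt_rpow_const_of_ne (ne_of_gt hu)).contDiffWithinAt

theorem exists_norm_iteratedFDeriv_rpow_le_of_eq_one (s : ℝ) (k : ℕ) :
    ∃ C > 0, ∀ (f : E → ℝ) (x : E) (D : ℝ), ContDiff ℝ k f → f x = 1 →
      (∀ i, 1 ≤ i → i ≤ k → ‖iteratedFDeriv ℝ i f x‖ ≤ D ^ i) →
      ‖iteratedFDeriv ℝ k (fun y => f y ^ s) x‖ ≤ C * D ^ k := by
  set Cg := ∑ i ∈ Finset.range (k + 1), ‖iteratedFDeriv ℝ i (fun u : ℝ => u ^ s) 1‖ + 1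
  have hCg : ∀ i ≤ k, ‖iteratedFDeriv ℝ i (fun u : ℝ => u ^ s) 1‖ ≤ Cg := fun i hi => by
    have := Finset.single_le_sum (f := fun j => ‖iteratedFDeriv ℝ j (fun u : ℝ => u ^ s) 1‖)
      (fun j _ => norm_nonneg _) (Finset.mem_range_succ_iff.2 hi)
    linarith
  refine ⟨k ! * Cg, by have := hCg 0 k.zero_le; positivity, fun f x D hf hx hD => ?_⟩
  have hU : IsOpen {y | 0 < f y} := isOpen_lt continuous_const hf.continuous
  have hxU : x ∈ {y | 0 < f y} := by simp [hx]
  rw [← iteratedFDerivWithin_of_isOpen k hU hxU]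
  refine norm_iteratedFDerivWithin_comp_le (contDiffOn_rpow_const_Ioi s) hf.contDiffOn le_rfl
    (uniqueDiffOn_Ioi 0) hU.uniqueDiffOn (fun y hy => hy) hxU (fun i hi => ?_) (fun i hi hik => ?_)
  · rw [hx, iteratedFDerivWithin_of_isOpen i isOpen_Ioi (mem_Ioi.2 one_pos)]
    exact hCg i hi
  · rw [iteratedFDerivWithin_of_isOpen i hU hxU]
    exact hD i hi hik

theorem exists_norm_iteratedFDeriv_rpow_le {f : E → ℝ} {k : ℕ} (hf : ContDiff ℝ k f)
    (s : ℝ) {K : ℝ} (hK : 0 < K) :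
    ∃ C > 0, ∀ x, 0 < f x →
      (∀ i, 1 ≤ i → i ≤ k → ‖iteratedFDeriv ℝ i f x‖ ≤ K ^ i * f x ^ (1 - (i : ℝ) / 2)) →
      ‖iteratedFDeriv ℝ k (fun y => f y ^ s) x‖ ≤ C * f x ^ (s - (k : ℝ) / 2) := by
  obtain ⟨C, hC, hCbound⟩ := exists_norm_iteratedFDeriv_rpow_le_of_eq_one (E := E) s k
  refine ⟨C * K ^ k, by positivity, fun x hx hbound => ?_⟩
  set t := f x
  have hpow (i : ℕ) : (t ^ (-(1 / 2) : ℝ)) ^ i = t ^ (-(i : ℝ) / 2) := by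
    rw [← Real.rpow_mul_natCast hx.le]; ring_nf
  have hlocal : (fun y => f y ^ s) =ᶠ[nhds x] t ^ s • fun y => (t⁻¹ • f) y ^ s := by
    filter_upwards [continuousAt_const.eventually_lt hf.continuous.continuousAt hx] with y hy
    rw [Pi.smul_apply, Pi.smul_apply, smul_eq_mul, smul_eq_mul,
      Real.mul_rpow (inv_nonneg.2 hx.le) hy.le, ← mul_assoc,
      ← Real.mul_rpow hx.le (inv_nonneg.2 hx.le), mul_inv_cancel₀ hx.ne', Real.one_rpow, one_mul]
  have hnorm : ∀ i, 1 ≤ i → i ≤ k →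
      ‖iteratedFDeriv ℝ i (t⁻¹ • f) x‖ ≤ (K * t ^ (-(1 / 2) : ℝ)) ^ i := by
    intro i hi hik
    rw [iteratedFDeriv_const_smul_apply (hf.contDiffAt.of_le (by exact_mod_cast hik)),
      norm_smul, Real.norm_of_nonneg (inv_nonneg.2 hx.le)]
    calc t⁻¹ * ‖iteratedFDeriv ℝ i f x‖ ≤ t⁻¹ * (K ^ i * t ^ (1 - (i : ℝ) / 2)) := by
          gcongr; exact hbound i hi hik
      _ = (K * t ^ (-(1 / 2) : ℝ)) ^ i := by
          rw [mul_pow, hpow, mul_left_comm, ← Real.rpow_neg_one, ← Real.rpow_add hx]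
          ring_nf
  have hsmooth : ContDiffAt ℝ k (fun y => (t⁻¹ • f) y ^ s) x :=
    (Real.contDiffAt_rpow_const_of_ne (by simp [t, hx.ne'])).comp x
      (hf.const_smul t⁻¹).contDiffAt
  calc ‖iteratedFDeriv ℝ k (fun y => f y ^ s) x‖
      = t ^ s * ‖iteratedFDeriv ℝ k (fun y => (t⁻¹ • f) y ^ s) x‖ := by
        rw [(hlocal.iteratedFDeriv ℝ k).eq_of_nhds, iteratedFDeriv_const_smul_apply hsmooth,
          norm_smul, Real.norm_of_nonneg (Real.rpow_nonneg hx.le s)]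
    _ ≤ t ^ s * (C * (K * t ^ (-(1 / 2) : ℝ)) ^ k) := by
        gcongr
        exact hCbound _ x _ (hf.const_smul t⁻¹) (inv_mul_cancel₀ hx.ne') hnorm
    _ = C * K ^ k * t ^ (s - (k : ℝ) / 2) := by
        rw [mul_pow, hpow, sub_eq_add_neg, Real.rpow_add hx, neg_div]; ring

end

theorem power_of_quadratic_symbol_estimates_general (n : ℕ)
    (r : QuadraticForm ℝ (EuclideanSpace ℝ (Fin (2 * n)))) (hr : ∀ X, 0 ≤ r X)
    (s : ℝ) (Ω : Set (EuclideanSpace ℝ (Fin (2 * n))))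
    (c β : ℝ) (hc : 0 < c)
    (hlow : ∀ X ∈ Ω, c * (1 + ‖X‖ ^ 2) ^ β ≤ r X) :
    (∀ k : ℕ, ∃ C > 0, ∀ X ∈ Ω,
      ‖iteratedFDeriv ℝ k (fun Y => (r Y) ^ s) X‖ ≤ C * (r X) ^ (s - (k : ℝ) / 2)) ∧
    (∃ C > 0, ∀ X ∈ Ω,
      ‖gradient (fun Y => (r Y) ^ s) X‖ ≤ C * (r X) ^ (s - 1 / 2)) := by
  have hpos : ∀ X ∈ Ω, 0 < r X := fun X hX =>
    (by positivity : 0 < c * (1 + ‖X‖ ^ 2) ^ β).trans_le (hlow X hX)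
  obtain ⟨K, hK, hrK⟩ := r.exists_norm_iteratedFDeriv_le hr
  have hderiv (k : ℕ) : ∃ C > 0, ∀ X ∈ Ω,
      ‖iteratedFDeriv ℝ k (fun Y => (r Y) ^ s) X‖ ≤ C * (r X) ^ (s - (k : ℝ) / 2) := by
    obtain ⟨C, hC, hbound⟩ := exists_norm_iteratedFDeriv_rpow_le r.contDiff s hK (k := k)
    exact ⟨C, hC, fun X hX => hbound X (hpos X hX) fun i _ _ => hrK i X (hpos X hX)⟩
  refine ⟨hderiv, ?_⟩
  obtain ⟨C, hC, hbound⟩ := hderiv 1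
  refine ⟨C, hC, fun X hX => ?_⟩
  rw [gradient, LinearIsometryEquiv.norm_map, ← norm_iteratedFDeriv_one]
  simpa using hbound X hX

/-- let `r` be a non-negative quadratic form on `ℝ^{2n}`, `s ∈ ℝ`, and
`Ω` open with `r(X) ≥ c⟨X⟩^{2β}` on `Ω` (`c, β > 0`, `⟨X⟩² = 1+‖X‖²`). Then every
derivative of order `k` of `r^s` is bounded on `Ω` by `C_k r(X)^{s−k/2}`; in
particular `|∇(r^s)| ≤ C r^{s−1/2}` on `Ω`. -/
theorem power_of_quadratic_symbol_estimates (n : ℕ)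
    (r : QuadraticForm ℝ (EuclideanSpace ℝ (Fin (2 * n)))) (hr : ∀ X, 0 ≤ r X)
    (s : ℝ) (Ω : Set (EuclideanSpace ℝ (Fin (2 * n)))) (hΩ : IsOpen Ω)
    (c β : ℝ) (hc : 0 < c) (hβ : 0 < β)
    (hlow : ∀ X ∈ Ω, c * (1 + ‖X‖ ^ 2) ^ β ≤ r X) :
    (∀ k : ℕ, ∃ C > 0, ∀ X ∈ Ω,
      ‖iteratedFDeriv ℝ k (fun Y => (r Y) ^ s) X‖ ≤ C * (r X) ^ (s - (k : ℝ) / 2)) ∧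
    (∃ C > 0, ∀ X ∈ Ω,
      ‖gradient (fun Y => (r Y) ^ s) X‖ ≤ C * (r X) ^ (s - 1 / 2)) :=
  power_of_quadratic_symbol_estimates_general n r hr s Ω c β hc hlow
end
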